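/- Let f be a monic real polynomial of degree n all of whose complex roots are real, which satisfies the Casas-Alvero conditions (for each j ∈ {1, ..., n-1} there exists z_j with f(z_j) = 0 and f^{(j)}(z_j) = 0) and is not of the form (X - b)^n. Let r be the maximum of the multiplicities of the roots of f, and let m, s be integers with r - 1 ≤ m, 2 ≤ s ≤ n - r and m + s ≤ n - 1. Denote C_m = { x ∈ ℝ : f(x) = 0 and f^{(m)}(x) = 0 } and C_{m+s} = { x ∈ ℝ : f(x) = 0 and f^{(m+s)}(x) = 0 }. Then the sum of the squares of the roots of f^{(m)} (counted with multiplicity) that do not belong to C_m ∩ C_{m+s} is greater than or equal to the sum of the squares of the roots of f^{(m+s)} (counted with multiplicity) that do not belong to C_m ∩ C_{m+s}. -/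

import Mathlib

/-!
Write `p₂(q)` for the sum of the squares of the roots of `q`. Derivatives of a real-rooted
polynomial `p` of degree `d` are real-rooted (Rolle), and comparing Vieta's formulas for `p` and
`p'` gives `d · eₖ(roots p') = (d - k) · eₖ(roots p)`. Together with `p₂ = e₁² - 2 e₂` and
Cauchy–Schwarz `e₁² ≤ d · p₂` this yields `p₂(p') ≤ p₂(p)`, hence `p₂(f⁽ᵐ⁺ˢ⁾) ≤ p₂(f⁽ᵐ⁾)`.

By Rolle again, a multiple root of `p'` is a root of `p`, so differentiation lowers every
multiplicity `≥ 2` by one. As no root of `f` has multiplicity above `r ≤ m + 1`, all roots of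
`f⁽ᵐ⁾` and `f⁽ᵐ⁺ˢ⁾` are simple: the points of `C_m ∩ C_{m+s}` occur exactly once in both root
multisets and can be removed from both sides of the inequality.
-/

open Polynomial

namespace Multiset

variable {R : Type*}

theorem esymm_one [CommSemiring R] (s : Multiset R) : s.esymm 1 = s.sum := by
  simp [esymm, powersetCard_one]

theorem esymm_cons_succ [CommSemiring R] (a : R) (s : Multiset R) (k : ℕ) :
    (a ::ₘ s).esymm (k + 1) = s.esymm (k + 1) + a * s.esymm k := by
  simp [esymm, powersetCard_cons, sum_map_mul_left]

theorem esymm_eq_zero_of_card_lt [CommSemiring R] {s : Multiset R} {k : ℕ} (h : card s < k) :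
    s.esymm k = 0 := by
  simp [esymm, powersetCard_eq_empty _ h]

theorem sum_map_sq_eq_sq_sum_sub_two_mul_esymm [CommRing R] (s : Multiset R) :
    (s.map (· ^ 2)).sum = s.sum ^ 2 - 2 * s.esymm 2 := by
  induction s using Multiset.induction_on with
  | empty => simp [esymm, powersetCard_zero_right]
  | cons a s ih =>
    rw [map_cons, sum_cons, sum_cons, esymm_cons_succ, esymm_one, ih]
    ring

theorem sq_sum_le_card_mul_sum_map_sq [CommRing R] [LinearOrder R] [IsStrictOrderedRing R]
    (s : Multiset R) : s.sum ^ 2 ≤ card s * (s.map (· ^ 2)).sum := by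
  have h := sq_sum_le_card_mul_sum_sq (s := (Finset.univ : Finset s)) (f := fun x => (x : R))
  rw [Finset.card_univ, card_coe, ← sum_eq_sum_coe, Finset.sum_eq_multiset_sum] at h
  rwa [← map_univ_comp_coe]

theorem sum_map_filter_not_le_of_filter_eq {α M : Type*} [AddCommMonoid M] [PartialOrder M]
    [IsOrderedCancelAddMonoid M] (φ : α → M) {P : α → Prop} [DecidablePred P] {s t : Multiset α}
    (hP : s.filter P = t.filter P) (h : (s.map φ).sum ≤ (t.map φ).sum) :
    ((s.filter (¬ P ·)).map φ).sum ≤ ((t.filter (¬ P ·)).map φ).sum := by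
  rw [← filter_add_not P s, ← filter_add_not P t, map_add, map_add, sum_add, sum_add, hP] at h
  exact le_of_add_le_add_left h

end Multiset

namespace Polynomial

theorem natDegree_iterate_derivative_eq {R : Type*} [Semiring R] [IsAddTorsionFree R] (p : R[X])
    (k : ℕ) : (derivative^[k] p).natDegree = p.natDegree - k := by
  induction k with
  | zero => rfl
  | succ k ih => rw [Function.iterate_succ_apply', natDegree_derivative, ih, Nat.sub_sub]

theorem iterate_derivative_ne_zero {R : Type*} [Semiring R] [IsAddTorsionFree R] {p : R[X]}
    (hp : p ≠ 0) {k : ℕ} (hk : k ≤ p.natDegree) : derivative^[k] p ≠ 0 := by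
  cases k with
  | zero => exact hp
  | succ k =>
    rw [Function.iterate_succ_apply', derivative_ne_zero, natDegree_iterate_derivative_eq]
    omega

theorem natCast_natDegree_mul_esymm_roots_derivative {R : Type*} [CommRing R] [IsDomain R]
    [CharZero R] {p : R[X]} (hp : Multiset.card p.roots = p.natDegree)
    (hp' : Multiset.card (derivative p).roots = (derivative p).natDegree) (k : ℕ) :
    (p.natDegree : R) * (derivative p).roots.esymm k =
      ((p.natDegree : R) - k) * p.roots.esymm k := by
  rcases lt_or_ge k p.natDegree with hk | hk
  · -- compare Vieta's formulas for the coefficient of `X ^ (d - 1 - k)` in `p'`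
    have hvieta := coeff_eq_esymm_roots_of_card hp' (k := p.natDegree - 1 - k)
      (by rw [natDegree_derivative]; omega)
    rw [coeff_derivative, coeff_eq_esymm_roots_of_card hp (by omega), leadingCoeff_derivative,
      natDegree_derivative, show p.natDegree - 1 - (p.natDegree - 1 - k) = k by omega,
      show p.natDegree - (p.natDegree - 1 - k + 1) = k by omega, ← Nat.cast_add_one,
      show p.natDegree - 1 - k + 1 = p.natDegree - k by omega, Nat.cast_sub hk.le] at hvieta
    have hp0 : p ≠ 0 := by rintro rfl; simp at hk
    have hunit : p.leadingCoeff * (-1) ^ k ≠ 0 := by simp [hp0]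
    apply mul_left_cancel₀ hunit
    linear_combination -hvieta
  · rw [natDegree_derivative] at hp'
    have hS : (p.natDegree : R) * (derivative p).roots.esymm k = 0 := by
      rcases Nat.eq_zero_or_pos p.natDegree with hd | hd
      · simp [hd]
      · rw [Multiset.esymm_eq_zero_of_card_lt (by omega), mul_zero]
    have hR : ((p.natDegree : R) - k) * p.roots.esymm k = 0 := by
      rcases hk.eq_or_lt with hkd | hkd
      · simp [hkd]
      · rw [Multiset.esymm_eq_zero_of_card_lt (by omega), mul_zero]
    rw [hS, hR]

theorem sum_sq_roots_derivative_le {K : Type*} [Field K] [LinearOrder K] [IsStrictOrderedRing K]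
    {p : K[X]} (hp : Multiset.card p.roots = p.natDegree)
    (hp' : Multiset.card (derivative p).roots = (derivative p).natDegree) :
    ((derivative p).roots.map (· ^ 2)).sum ≤ (p.roots.map (· ^ 2)).sum := by
  rcases Nat.eq_zero_or_pos p.natDegree with hd | hd
  · rw [natDegree_derivative, hd] at hp'
    rw [hd, Multiset.card_eq_zero] at hp
    rw [Multiset.card_eq_zero.1 hp', hp]
  have hsum := natCast_natDegree_mul_esymm_roots_derivative hp hp' 1
  have hesymm := natCast_natDegree_mul_esymm_roots_derivative hp hp' 2
  have hcs := Multiset.sq_sum_le_card_mul_sum_map_sq p.roots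
  rw [Multiset.esymm_one, Multiset.esymm_one] at hsum
  rw [hp] at hcs
  simp only [Multiset.sum_map_sq_eq_sq_sum_sub_two_mul_esymm] at hcs ⊢
  set d : K := (p.natDegree : K)
  have key : d ^ 2 * ((p.roots.sum ^ 2 - 2 * p.roots.esymm 2) -
      ((derivative p).roots.sum ^ 2 - 2 * (derivative p).roots.esymm 2)) =
      (2 * d - 1) * p.roots.sum ^ 2 - 4 * d * p.roots.esymm 2 := by
    linear_combination (-(d * (derivative p).roots.sum + (d - 1) * p.roots.sum)) * hsum +
      2 * d * hesymm
  have hnonneg : 0 ≤ (2 * d - 1) * p.roots.sum ^ 2 - 4 * d * p.roots.esymm 2 := by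
    linear_combination (2 : K) * hcs + sq_nonneg p.roots.sum
  rw [← key] at hnonneg
  exact sub_nonneg.1 ((mul_nonneg_iff_of_pos_left (by positivity)).1 hnonneg)

theorem ne_zero_of_forall_aeval_eq_zero_im_eq_zero {p : ℝ[X]}
    (h : ∀ z : ℂ, aeval z p = 0 → z.im = 0) : p ≠ 0 := by
  rintro rfl
  simpa using h Complex.I (by simp)

theorem card_roots_eq_natDegree_of_forall_aeval_eq_zero_im_eq_zero {p : ℝ[X]}
    (h : ∀ z : ℂ, aeval z p = 0 → z.im = 0) : Multiset.card p.roots = p.natDegree := by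
  have hinj := (algebraMap ℝ ℂ).injective
  have hmap : (p.map (algebraMap ℝ ℂ)).roots ≤ p.roots.map (algebraMap ℝ ℂ) := by
    rw [Multiset.le_iff_count]
    intro z
    by_cases hz : aeval z p = 0
    · obtain ⟨x, rfl⟩ : ∃ x : ℝ, algebraMap ℝ ℂ x = z := ⟨z.re, Complex.ext rfl (h z hz).symm⟩
      rw [Multiset.count_map_eq_count' _ _ hinj, count_roots, count_roots,
        ← eq_rootMultiplicity_map hinj]
    · rw [Multiset.count_eq_zero.2]
      · exact Nat.zero_le _
      · rw [mem_roots', IsRoot, ← eval₂_eq_eval_map, ← aeval_def]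
        exact fun hroot => hz hroot.2
  refine le_antisymm (card_roots' p) ?_
  calc p.natDegree = Multiset.card (p.map (algebraMap ℝ ℂ)).roots :=
        (IsAlgClosed.card_roots_map_eq_natDegree_of_injective p hinj).symm
    _ ≤ Multiset.card p.roots := by simpa using Multiset.card_le_card hmap

theorem card_roots_derivative_eq_natDegree {p : ℝ[X]} (hp : Multiset.card p.roots = p.natDegree) :
    Multiset.card (derivative p).roots = (derivative p).natDegree := by
  have hrolle := card_roots_le_derivative p
  have hle := card_roots' (derivative p)
  rw [natDegree_derivative] at hle ⊢
  omega

theorem card_roots_iterate_derivative_eq_natDegree {p : ℝ[X]}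
    (hp : Multiset.card p.roots = p.natDegree) (k : ℕ) :
    Multiset.card (derivative^[k] p).roots = (derivative^[k] p).natDegree := by
  induction k with
  | zero => exact hp
  | succ k ih =>
    rw [Function.iterate_succ_apply']
    exact card_roots_derivative_eq_natDegree ih

theorem sum_sq_roots_iterate_derivative_le {p : ℝ[X]} (hp : Multiset.card p.roots = p.natDegree)
    (k : ℕ) : ((derivative^[k] p).roots.map (· ^ 2)).sum ≤ (p.roots.map (· ^ 2)).sum := by
  induction k with
  | zero => rfl
  | succ k ih =>
    rw [Function.iterate_succ_apply']
    have hk := card_roots_iterate_derivative_eq_natDegree hp k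
    exact (sum_sq_roots_derivative_le hk (card_roots_derivative_eq_natDegree hk)).trans ih

theorem rootMultiplicity_derivative_le_one_of_not_isRoot {p : ℝ[X]}
    (hp : Multiset.card p.roots = p.natDegree) {x : ℝ} (hx : ¬ p.IsRoot x) :
    rootMultiplicity x (derivative p) ≤ 1 := by
  classical
  by_contra! hx2
  have hp0 : p ≠ 0 := by rintro rfl; exact hx (by simp)
  -- A root of `p` of multiplicity `μ` is a root of `p'` of multiplicity `μ - 1`, Rolle gives
  -- `#distinct roots of p - 1` further distinct roots, and `x` counts twice: too many roots.
  set D := (derivative p).roots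
  have hrepeated : p.roots - p.roots.dedup ≤ D.filter p.IsRoot := by
    rw [Multiset.le_iff_count]
    intro z
    rw [Multiset.count_sub, Multiset.count_filter, Multiset.count_dedup]
    by_cases hz : p.IsRoot z
    · rw [if_pos ((mem_roots hp0).2 hz), if_pos hz, count_roots, count_roots,
        derivative_rootMultiplicity_of_root hz]
    · rw [Multiset.count_eq_zero.2 (mt (mem_roots hp0).1 hz)]
      exact (Nat.zero_sub _).trans_le (Nat.zero_le _)
  have hrolle : p.roots.dedup.card ≤ (D.filter (¬ p.IsRoot ·)).dedup.card + 1 := by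
    simp only [← Multiset.card_toFinset]
    convert card_roots_toFinset_le_card_roots_derivative_sdiff_roots_succ p using 3
    ext z
    simp [D, mem_roots hp0]
  have hx_repeated : (D.filter (¬ p.IsRoot ·)).dedup.card < (D.filter (¬ p.IsRoot ·)).card := by
    have hdup : ¬ (D.filter (¬ p.IsRoot ·)).Nodup := by
      rw [Multiset.nodup_iff_count_le_one]
      push Not
      exact ⟨x, by rwa [Multiset.count_filter_of_pos (a := x) hx, count_roots]⟩
    exact Multiset.card_lt_card ((Multiset.dedup_le _).lt_of_ne (mt Multiset.dedup_eq_self.1 hdup))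
  have hsplit := congrArg Multiset.card (Multiset.filter_add_not p.IsRoot D)
  rw [Multiset.card_add] at hsplit
  have hdeg : D.card ≤ p.natDegree - 1 := (card_roots' _).trans (natDegree_derivative_le p)
  have hrep := Multiset.card_le_card hrepeated
  rw [Multiset.card_sub (Multiset.dedup_le _)] at hrep
  have := Multiset.card_le_card (Multiset.dedup_le p.roots)
  omega

theorem rootMultiplicity_derivative_le {p : ℝ[X]} (hp : Multiset.card p.roots = p.natDegree)
    (x : ℝ) : rootMultiplicity x (derivative p) ≤ max (rootMultiplicity x p - 1) 1 := by
  by_cases hx : p.IsRoot x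
  · exact (derivative_rootMultiplicity_of_root hx).trans_le (le_max_left _ _)
  · exact (rootMultiplicity_derivative_le_one_of_not_isRoot hp hx).trans (le_max_right _ _)

theorem rootMultiplicity_iterate_derivative_le {p : ℝ[X]}
    (hp : Multiset.card p.roots = p.natDegree) (x : ℝ) (k : ℕ) :
    rootMultiplicity x (derivative^[k] p) ≤ max (rootMultiplicity x p - k) 1 := by
  induction k with
  | zero => exact le_max_left _ _
  | succ k ih =>
    rw [Function.iterate_succ_apply']
    have := rootMultiplicity_derivative_le (card_roots_iterate_derivative_eq_natDegree hp k) x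
    omega

theorem rootMultiplicity_iterate_derivative_eq_one {p : ℝ[X]}
    (hp : Multiset.card p.roots = p.natDegree) {k : ℕ} (hpk : derivative^[k] p ≠ 0) {x : ℝ}
    (hmult : rootMultiplicity x p ≤ k + 1) (hx : (derivative^[k] p).IsRoot x) :
    rootMultiplicity x (derivative^[k] p) = 1 := by
  have := rootMultiplicity_iterate_derivative_le hp x k
  exact le_antisymm (by omega) ((rootMultiplicity_pos hpk).2 hx)

end Polynomial

theorem stmt10_general (n r m s : ℕ) (f : Polynomial ℝ) (hdeg : f.natDegree = n)
    (hreal : ∀ z : ℂ, Polynomial.aeval z f = 0 → z.im = 0)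
    (hr1 : ∀ x : ℝ, Polynomial.rootMultiplicity x f ≤ r)
    (hm : r - 1 ≤ m) (hms : m + s ≤ n - 1) :
    ((((Polynomial.derivative^[m + s] f).roots).filter
        (fun x => ¬ (f.eval x = 0 ∧ (Polynomial.derivative^[m] f).eval x = 0 ∧
          (Polynomial.derivative^[m + s] f).eval x = 0))).map (fun x => x ^ 2)).sum ≤
      ((((Polynomial.derivative^[m] f).roots).filter
        (fun x => ¬ (f.eval x = 0 ∧ (Polynomial.derivative^[m] f).eval x = 0 ∧
          (Polynomial.derivative^[m + s] f).eval x = 0))).map (fun x => x ^ 2)).sum := by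
  have hf := card_roots_eq_natDegree_of_forall_aeval_eq_zero_im_eq_zero hreal
  have hsimple : ∀ k, m ≤ k → k ≤ n → ∀ x, (derivative^[k] f).IsRoot x →
      (derivative^[k] f).roots.count x = 1 := fun k hmk hkn x hx =>
    (count_roots _).trans <| rootMultiplicity_iterate_derivative_eq_one hf
      (iterate_derivative_ne_zero (ne_zero_of_forall_aeval_eq_zero_im_eq_zero hreal) (by omega))
      (by have := hr1 x; omega) hx
  apply Multiset.sum_map_filter_not_le_of_filter_eq
  · ext x
    rw [Multiset.count_filter, Multiset.count_filter]
    split_ifs with hx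
    · rw [hsimple (m + s) (by omega) (by omega) x hx.2.2, hsimple m le_rfl (by omega) x hx.2.1]
    · rfl
  · rw [add_comm, Function.iterate_add_apply]
    exact sum_sq_roots_iterate_derivative_le (card_roots_iterate_derivative_eq_natDegree hf m) s

theorem stmt10 (n r m s : ℕ) (f : Polynomial ℝ) (hf : f.Monic) (hdeg : f.natDegree = n)
    (hreal : ∀ z : ℂ, Polynomial.aeval z f = 0 → z.im = 0)
    (hCA : ∀ j : ℕ, 1 ≤ j → j ≤ n - 1 →
      ∃ z : ℝ, f.eval z = 0 ∧ (Polynomial.derivative^[j] f).eval z = 0)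
    (hnt : ¬ ∃ b : ℝ, f = (Polynomial.X - Polynomial.C b) ^ n)
    (hr1 : ∀ x : ℝ, Polynomial.rootMultiplicity x f ≤ r)
    (hr2 : ∃ x : ℝ, f.eval x = 0 ∧ Polynomial.rootMultiplicity x f = r)
    (hm : r - 1 ≤ m) (hs2 : 2 ≤ s) (hsn : s ≤ n - r) (hms : m + s ≤ n - 1) :
    ((((Polynomial.derivative^[m + s] f).roots).filter
        (fun x => ¬ (f.eval x = 0 ∧ (Polynomial.derivative^[m] f).eval x = 0 ∧
          (Polynomial.derivative^[m + s] f).eval x = 0))).map (fun x => x ^ 2)).sum ≤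
      ((((Polynomial.derivative^[m] f).roots).filter
        (fun x => ¬ (f.eval x = 0 ∧ (Polynomial.derivative^[m] f).eval x = 0 ∧
          (Polynomial.derivative^[m + s] f).eval x = 0))).map (fun x => x ^ 2)).sum :=
  stmt10_general n r m s f hdeg hreal hr1 hm hms
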